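/- For λ = λ_r + i λ_i with λ_i < -1, the generalized Fourier transform (1/√(2π)) ∫_ℝ e^{-iλx} (e^x - e^k)^+ dx of the European call payoff h(x) = (e^x - e^k)^+ equals -e^{k - i k λ} / (√(2π) (iλ + λ²)), and in particular the integral converges absolutely. -/

import Mathlib

open MeasureTheory
open Set

/-!
On `x > k` the payoff is `e^x - e^k` and it vanishes elsewhere, so against `e^{bx}` it
integrates to the difference of two exponential integrals over `(k, ∞)`, both convergent once
`Re b < -1`: `∫_k^∞ e^{(b+1)x} - e^k e^{bx} dx = e^{(b+1)k} / (b (b+1))`. Taking `b = -iλ`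
gives the theorem, since `b (b+1) = -(iλ + λ²)`.
-/

lemma cexp_mul_mul_call_payoff_eq_indicator (b : ℂ) (k x : ℝ) :
    Complex.exp (b * x) * (max (Real.exp x - Real.exp k) 0 : ℝ) =
      (Ioi k).indicator
        (fun x : ℝ => Complex.exp ((b + 1) * x) - Real.exp k * Complex.exp (b * x)) x := by
  rcases le_or_gt x k with hx | hx
  · have hpayoff : Real.exp x - Real.exp k ≤ 0 := sub_nonpos.2 (Real.exp_le_exp.2 hx)
    rw [indicator_of_notMem (show x ∉ Ioi k from not_lt.2 hx), max_eq_right hpayoff]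
    simp
  · have hpayoff : 0 ≤ Real.exp x - Real.exp k := sub_nonneg.2 (Real.exp_le_exp.2 hx.le)
    rw [indicator_of_mem (show x ∈ Ioi k from hx), max_eq_left hpayoff, add_mul, one_mul,
      Complex.exp_add]
    push_cast
    ring

lemma integrableOn_cexp_mul_sub_call_payoff {b : ℂ} (hb : b.re < -1) (k : ℝ) :
    IntegrableOn
      (fun x : ℝ => Complex.exp ((b + 1) * x) - Real.exp k * Complex.exp (b * x)) (Ioi k) :=
  (integrableOn_exp_mul_complex_Ioi (by rw [Complex.add_re, Complex.one_re]; linarith) k).sub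
    ((integrableOn_exp_mul_complex_Ioi (by linarith) k).const_mul _)

lemma integrable_cexp_mul_mul_call_payoff {b : ℂ} (hb : b.re < -1) (k : ℝ) :
    Integrable (fun x : ℝ => Complex.exp (b * x) * (max (Real.exp x - Real.exp k) 0 : ℝ)) := by
  simp_rw [cexp_mul_mul_call_payoff_eq_indicator]
  exact (integrableOn_cexp_mul_sub_call_payoff hb k).integrable_indicator measurableSet_Ioi

lemma integral_cexp_mul_mul_call_payoff {b : ℂ} (hb : b.re < -1) (k : ℝ) :
    ∫ x : ℝ, Complex.exp (b * x) * (max (Real.exp x - Real.exp k) 0 : ℝ) =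
      Complex.exp ((b + 1) * k) / (b * (b + 1)) := by
  have hb_re : b.re < 0 := by linarith
  have hb1_re : (b + 1).re < 0 := by rw [Complex.add_re, Complex.one_re]; linarith
  have hb0 : b ≠ 0 := by rintro rfl; simp at hb_re
  have hb1 : b + 1 ≠ 0 := by intro h; simp [h] at hb1_re
  have hexp : Complex.exp ((b + 1) * k) = Real.exp k * Complex.exp (b * k) := by
    rw [add_mul, one_mul, Complex.exp_add, Complex.ofReal_exp, mul_comm]
  simp_rw [cexp_mul_mul_call_payoff_eq_indicator]
  rw [integral_indicator measurableSet_Ioi,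
    integral_sub (integrableOn_exp_mul_complex_Ioi hb1_re k)
      ((integrableOn_exp_mul_complex_Ioi hb_re k).const_mul _),
    integral_const_mul, integral_exp_mul_complex_Ioi hb1_re, integral_exp_mul_complex_Ioi hb_re,
    hexp]
  field_simp
  ring

/-- Generalized Fourier transform of the European call payoff `(e^x - e^k)^+`:
for `λ = λ_r + i λ_i` with `λ_i < -1`, the integrand is absolutely integrable and
`(1/√(2π)) ∫ e^{-iλx} (e^x - e^k)^+ dx = -e^{k - i k λ} / (√(2π) (iλ + λ²))`. -/
theorem call_payoff_generalized_fourier_transform (k : ℝ) (lam : ℂ) (hlam : lam.im < -1) :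
    Integrable (fun x : ℝ =>
        Complex.exp (-Complex.I * lam * x) * (max (Real.exp x - Real.exp k) 0 : ℝ)) ∧
    (1 / Real.sqrt (2 * Real.pi) : ℂ) *
        ∫ x : ℝ, Complex.exp (-Complex.I * lam * x) * (max (Real.exp x - Real.exp k) 0 : ℝ) =
      -Complex.exp (k - Complex.I * k * lam) /
        (Real.sqrt (2 * Real.pi) * (Complex.I * lam + lam ^ 2)) := by
  have hb : (-Complex.I * lam).re < -1 := by simpa using hlam
  refine ⟨integrable_cexp_mul_mul_call_payoff hb k, ?_⟩
  have hexponent : (-Complex.I * lam + 1) * k = k - Complex.I * k * lam := by ring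
  have hdenominator : -Complex.I * lam * (-Complex.I * lam + 1) = -(Complex.I * lam + lam ^ 2) := by
    linear_combination lam ^ 2 * Complex.I_sq
  rw [integral_cexp_mul_mul_call_payoff hb k, hexponent, hdenominator]
  field_simp
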